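/- Let $F : \mathcal{K} \times R \to \mathbb{L}$ be $\mathbb{F}$-key-homomorphic ($\mathbb{F}$-linear in the key), $x_0, x_1, \ldots, x_t \in \mathbb{F}$ distinct, $p \in \mathcal{K}[X]$ of degree at most $t-1$, and $r \in R$. Then there exists a polynomial $\delta(X) \in \mathbb{L}[X]$ of degree at most $t-1$ such that $\delta(x_i) = F(p(x_i), r)$ for all $0 \le i \le t$. -/

import Mathlib

/-!
Since `Fn · r` is `F`-linear, applying it coefficientwise to `p` gives a polynomial
`δ ∈ L[X]` of degree at most `deg p`, and at every point of `F` evaluation commutes with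
this coefficientwise map: `δ(c) = ∑ Fn(pₙ) cⁿ = Fn(∑ pₙ cⁿ) = Fn(p(c))`.
-/

namespace Polynomial

variable {F K L : Type*} [CommSemiring F] [Semiring K] [Algebra F K] [Semiring L] [Algebra F L]

noncomputable def mapLinear (f : K →ₗ[F] L) (p : K[X]) : L[X] :=
  ∑ n ∈ Finset.range (p.natDegree + 1), C (f (p.coeff n)) * X ^ n

theorem coeff_mapLinear (f : K →ₗ[F] L) (p : K[X]) (n : ℕ) :
    (p.mapLinear f).coeff n = f (p.coeff n) := by
  simp only [mapLinear, finsetSum_coeff, coeff_C_mul_X_pow, Finset.sum_ite_eq, Finset.mem_range]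
  split_ifs with hn
  · rfl
  · rw [coeff_eq_zero_of_natDegree_lt (by omega), map_zero]

theorem natDegree_mapLinear_le (f : K →ₗ[F] L) (p : K[X]) :
    (p.mapLinear f).natDegree ≤ p.natDegree :=
  natDegree_le_iff_coeff_eq_zero.mpr fun n hn => by
    rw [coeff_mapLinear, coeff_eq_zero_of_natDegree_lt (by exact_mod_cast hn), map_zero]

theorem eval_algebraMap_mapLinear (f : K →ₗ[F] L) (p : K[X]) (c : F) :
    (p.mapLinear f).eval (algebraMap F L c) = f (p.eval (algebraMap F K c)) := by
  rw [mapLinear, eval_finsetSum, eval_eq_sum_range, map_sum]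
  refine Finset.sum_congr rfl fun n _ => ?_
  rw [eval_C_mul, eval_X_pow, ← map_pow, ← Algebra.commutes, ← Algebra.smul_def, ← map_pow,
    ← Algebra.commutes, ← Algebra.smul_def, map_smul]

end Polynomial

theorem keyhom_prf_values_interpolate_general
    (F K L R : Type*) [Field F] [Field K] [Algebra F K]
    [Field L] [Algebra F L]
    (Fn : K → R → L)
    (hadd : ∀ (k₁ k₂ : K) (r : R), Fn (k₁ + k₂) r = Fn k₁ r + Fn k₂ r)
    (hsmul : ∀ (c : F) (k : K) (r : R), Fn (algebraMap F K c * k) r = algebraMap F L c * Fn k r)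
    (t : ℕ)
    (x : Fin (t + 1) → F)
    (p : Polynomial K) (hp : p.natDegree ≤ t - 1) (r : R) :
    ∃ δ : Polynomial L, δ.natDegree ≤ t - 1 ∧
      ∀ i : Fin (t + 1),
        δ.eval (algebraMap F L (x i)) = Fn (p.eval (algebraMap F K (x i))) r := by
  let f : K →ₗ[F] L :=
    { toFun := (Fn · r)
      map_add' := (hadd · · r)
      map_smul' := fun c k => by simp only [Algebra.smul_def, hsmul, RingHom.id_apply] }
  exact ⟨p.mapLinear f, (p.natDegree_mapLinear_le f).trans hp,
    fun i => p.eval_algebraMap_mapLinear f (x i)⟩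

theorem keyhom_prf_values_interpolate
    (F K L R : Type*) [Field F] [Field K] [Algebra F K]
    [Field L] [Algebra F L]
    (Fn : K → R → L)
    (hadd : ∀ (k₁ k₂ : K) (r : R), Fn (k₁ + k₂) r = Fn k₁ r + Fn k₂ r)
    (hsmul : ∀ (c : F) (k : K) (r : R), Fn (algebraMap F K c * k) r = algebraMap F L c * Fn k r)
    (t : ℕ) (ht : 1 ≤ t)
    (x : Fin (t + 1) → F) (hx : Function.Injective x)
    (p : Polynomial K) (hp : p.natDegree ≤ t - 1) (r : R) :
    ∃ δ : Polynomial L, δ.natDegree ≤ t - 1 ∧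
      ∀ i : Fin (t + 1),
        δ.eval (algebraMap F L (x i)) = Fn (p.eval (algebraMap F K (x i))) r :=
  keyhom_prf_values_interpolate_general F K L R Fn hadd hsmul t x p hp r
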